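/- arXiv:math-ph/0407007 — 5 statements merged into one kernel-verified Lean document; each statement's English description precedes it below -/
import Mathlib

section
/- Let p ∈ (1,∞) and consider the Amari embedding φ: ρ ↦ p·ρ^{1/p} from strictly positive probability vectors P¹ₙ ⊂ Rⁿ into Rⁿ with norm ‖f‖/p where ‖·‖ is the ℓ^p norm. Then the dualized pull-back bilinear form ⟨A,B⟩ = ⟨D_ρφ(A), D_ρ(J∘φ)(B)⟩, where J is the duality map of this normed space, equals the Fisher information Σᵢ AᵢBᵢ/ρᵢ for tangent vectors A,B at ρ. -/
open Finset Real

/-- The dualized pull-back along the Amari embedding `ρ ↦ p ρ^{1/p}` is the Fisher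
information: `⟨D_ρφ(A), D_ρ(J∘φ)(B)⟩ = Σᵢ AᵢBᵢ/ρᵢ`, where
`D_ρφ(A)ᵢ = ρᵢ^{1/p−1} Aᵢ` and `D_ρ(J∘φ)(B)ᵢ = ρᵢ^{1/p̃−1} Bᵢ`. -/
theorem dualized_pullback_eq_fisher {n : ℕ} (p pt : ℝ) (hp : 1 < p)
    (hpt : 1 / p + 1 / pt = 1) (ρ A B : Fin n → ℝ)
    (hρ : ∀ i, 0 < ρ i) (hρ1 : ∑ i, ρ i = 1)
    (hA : ∑ i, A i = 0) (hB : ∑ i, B i = 0) :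
    ∑ i, (ρ i ^ (1 / p - 1) * A i) * (ρ i ^ (1 / pt - 1) * B i) =
      ∑ i, A i * B i / ρ i := by
  refine Finset.sum_congr rfl fun i _ => ?_
  have h := (hρ i).ne'
  have : ρ i ^ (1 / p - 1) * ρ i ^ (1 / pt - 1) = (ρ i)⁻¹ := by
    rw [← Real.rpow_add (hρ i)]
    have : 1 / p - 1 + (1 / pt - 1) = -1 := by linarith
    rw [this, Real.rpow_neg_one]
  calc ρ i ^ (1 / p - 1) * A i * (ρ i ^ (1 / pt - 1) * B i)
      = ρ i ^ (1 / p - 1) * ρ i ^ (1 / pt - 1) * (A i * B i) := by ring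
    _ = A i * B i / ρ i := by rw [this]; field_simp
end

section
/- For p ∈ (1,∞), the curvature of the α-geometry on the positive quadrant curve {(x,y): (x/p)^p + (y/p)^p = 1, x,y > 0}, parametrized by x = p(cos θ)^{2/p}, y = p(sin θ)^{2/p} for θ ∈ (0, π/2), is c_p(θ) = ((p-1)/p) · (1/2)^{2(1-2/p)} · (sin 2θ)^{2(1-2/p)} / [ (cos θ)^{4/p̃} + (sin θ)^{4/p̃} ]^{3/2}, where 1/p + 1/p̃ = 1. -/
/-!
For `x = k cos^a t`, `y = k sin^a t` one has `x' = -k a sin t cos^{a-1} t` and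
`y' = k a cos t sin^{a-1} t`. In the cross term `x'y'' - x''y'` everything except a factor
`cos² + sin²` cancels, leaving `(ka)² (2 - a) (sin t cos t)^{a-1}`, while the squared speed
factors as `(ka)² (sin t cos t)^{2(a-1)} (cos^{2(2-a)} t + sin^{2(2-a)} t)`. Taking `k = p`,
`a = 2/p` gives the stated curvature, the conjugate exponent entering through
`2 (2 - 2/p) = 4/p̃`.
-/

open Real Filter Topology

/-- Curvature of the α-geometry on `P¹₂`, parametrized by `ρ = (cos²θ, sin²θ)`. -/
noncomputable def cCurv (p pt θ : ℝ) : ℝ :=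
  ((p - 1) / p) * (1 / 2 : ℝ) ^ (2 * (1 - 2 / p)) *
    (Real.sin (2 * θ)) ^ (2 * (1 - 2 / p)) /
      ((Real.cos θ) ^ (4 / pt) + (Real.sin θ) ^ (4 / pt)) ^ ((3 : ℝ) / 2)

noncomputable def planeCurvature (x y : ℝ → ℝ) (t : ℝ) : ℝ :=
  |deriv x t * deriv (deriv y) t - deriv (deriv x) t * deriv y t| /
    (deriv x t ^ 2 + deriv y t ^ 2) ^ ((3 : ℝ) / 2)

lemma rpow_sub_one_eq_rpow_sub_two_mul {x : ℝ} (hx : x ≠ 0) (a : ℝ) :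
    x ^ (a - 1) = x ^ (a - 2) * x := by
  rw [← rpow_add_one hx]
  ring_nf

lemma rpow_two_mul_eq_inv_sq_rpow_neg {x : ℝ} (hx : 0 ≤ x) (e : ℝ) :
    x ^ (2 * e) = ((x ^ (-e)) ^ 2)⁻¹ := by
  rw [← rpow_natCast, ← rpow_mul hx, ← rpow_neg hx]
  push_cast
  ring_nf

lemma sq_rpow_three_halves (x : ℝ) : (x ^ 2) ^ ((3 : ℝ) / 2) = |x| ^ 3 := by
  rw [← sq_abs, ← rpow_natCast, ← rpow_mul (abs_nonneg x)]
  norm_num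

lemma hasDerivAt_const_mul_cos_rpow (k a : ℝ) {t : ℝ} (ht : cos t ≠ 0) :
    HasDerivAt (fun t => k * cos t ^ a) (-(k * a) * sin t * cos t ^ (a - 1)) t :=
  (((hasDerivAt_cos t).rpow_const (Or.inl ht)).const_mul k).congr_deriv (by ring)

lemma hasDerivAt_const_mul_sin_rpow (k a : ℝ) {t : ℝ} (ht : sin t ≠ 0) :
    HasDerivAt (fun t => k * sin t ^ a) (k * a * cos t * sin t ^ (a - 1)) t :=
  (((hasDerivAt_sin t).rpow_const (Or.inl ht)).const_mul k).congr_deriv (by ring)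

lemma deriv_deriv_const_mul_cos_rpow (k a : ℝ) {t : ℝ} (ht : 0 < cos t) :
    deriv (deriv fun t => k * cos t ^ a) t =
      -(k * a) * cos t ^ (a - 2) * (cos t ^ 2 - (a - 1) * sin t ^ 2) := by
  have hderiv : deriv (fun t => k * cos t ^ a) =ᶠ[𝓝 t]
      fun t => -(k * a) * (sin t * cos t ^ (a - 1)) :=
    (continuous_cos.continuousAt.eventually (lt_mem_nhds ht)).mono fun s hs => by
      rw [(hasDerivAt_const_mul_cos_rpow k a hs.ne').deriv, mul_assoc]
  have h : HasDerivAt (fun t => -(k * a) * (sin t * cos t ^ (a - 1))) _ t :=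
    ((hasDerivAt_sin t).mul ((hasDerivAt_cos t).rpow_const (Or.inl ht.ne'))).const_mul _
  rw [hderiv.deriv_eq, h.deriv, rpow_sub_one_eq_rpow_sub_two_mul ht.ne',
    show a - 1 - 1 = a - 2 by ring]
  ring

lemma deriv_deriv_const_mul_sin_rpow (k a : ℝ) {t : ℝ} (ht : 0 < sin t) :
    deriv (deriv fun t => k * sin t ^ a) t =
      k * a * sin t ^ (a - 2) * ((a - 1) * cos t ^ 2 - sin t ^ 2) := by
  have hderiv : deriv (fun t => k * sin t ^ a) =ᶠ[𝓝 t]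
      fun t => k * a * (cos t * sin t ^ (a - 1)) :=
    (continuous_sin.continuousAt.eventually (lt_mem_nhds ht)).mono fun s hs => by
      rw [(hasDerivAt_const_mul_sin_rpow k a hs.ne').deriv, mul_assoc]
  have h : HasDerivAt (fun t => k * a * (cos t * sin t ^ (a - 1))) _ t :=
    ((hasDerivAt_cos t).mul ((hasDerivAt_sin t).rpow_const (Or.inl ht.ne'))).const_mul _
  rw [hderiv.deriv_eq, h.deriv, rpow_sub_one_eq_rpow_sub_two_mul ht.ne',
    show a - 1 - 1 = a - 2 by ring]
  ring

theorem planeCurvature_const_mul_cos_rpow_sin_rpow (k a : ℝ) {t : ℝ} (hc : 0 < cos t)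
    (hs : 0 < sin t) :
    planeCurvature (fun t => k * cos t ^ a) (fun t => k * sin t ^ a) t =
      |2 - a| / |k * a| * (sin t * cos t) ^ (2 * (1 - a)) /
        (cos t ^ (2 * (2 - a)) + sin t ^ (2 * (2 - a))) ^ ((3 : ℝ) / 2) := by
  rw [planeCurvature, (hasDerivAt_const_mul_cos_rpow k a hc.ne').deriv,
    (hasDerivAt_const_mul_sin_rpow k a hs.ne').deriv, deriv_deriv_const_mul_cos_rpow k a hc,
    deriv_deriv_const_mul_sin_rpow k a hs, rpow_sub_one_eq_rpow_sub_two_mul hc.ne',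
    rpow_sub_one_eq_rpow_sub_two_mul hs.ne', rpow_two_mul_eq_inv_sq_rpow_neg (mul_pos hs hc).le,
    rpow_two_mul_eq_inv_sq_rpow_neg hc.le, rpow_two_mul_eq_inv_sq_rpow_neg hs.le, neg_sub,
    neg_sub, mul_rpow hs.le hc.le, rpow_sub_one_eq_rpow_sub_two_mul hs.ne',
    rpow_sub_one_eq_rpow_sub_two_mul hc.ne']
  set c := cos t
  set s := sin t
  set γ := c ^ (a - 2)
  set σ := s ^ (a - 2)
  set K := k * a
  have hγ : 0 < γ := rpow_pos_of_pos hc _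
  have hσ : 0 < σ := rpow_pos_of_pos hs _
  have hQ : 0 < s * c * γ * σ := by positivity
  have hcross : -K * s * (γ * c) * (K * σ * ((a - 1) * c ^ 2 - s ^ 2)) -
      -K * γ * (c ^ 2 - (a - 1) * s ^ 2) * (K * c * (σ * s)) =
        K ^ 2 * (2 - a) * (s * c * γ * σ) := by
    linear_combination K ^ 2 * (2 - a) * s * c * γ * σ * sin_sq_add_cos_sq t
  have hspeed : (-K * s * (γ * c)) ^ 2 + (K * c * (σ * s)) ^ 2 =
      (K * (s * c * γ * σ)) ^ 2 * ((γ ^ 2)⁻¹ + (σ ^ 2)⁻¹) := by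
    field_simp
    ring
  rw [hcross, hspeed, mul_rpow (sq_nonneg _) (by positivity), sq_rpow_three_halves]
  rcases eq_or_ne K 0 with hK | hK
  -- a constant curve: both sides are `0` by the convention `x / 0 = 0`
  · simp [hK]
  · rw [abs_mul, abs_mul, abs_pow, abs_mul K, abs_of_pos hQ]
    field_simp

/-- Curvature of the curve `(x/p)^p + (y/p)^p = 1` parametrized by
`x = p (cos θ)^{2/p}`, `y = p (sin θ)^{2/p}`. -/
theorem curvature_alpha_geometry (p pt : ℝ) (hp : 1 < p) (hpt : 1 / p + 1 / pt = 1)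
    (θ : ℝ) (hθ : θ ∈ Set.Ioo 0 (π / 2)) :
    |deriv (fun t => p * Real.cos t ^ (2 / p)) θ *
        deriv (deriv (fun t => p * Real.sin t ^ (2 / p))) θ -
      deriv (deriv (fun t => p * Real.cos t ^ (2 / p))) θ *
        deriv (fun t => p * Real.sin t ^ (2 / p)) θ| /
      ((deriv (fun t => p * Real.cos t ^ (2 / p)) θ) ^ 2 +
        (deriv (fun t => p * Real.sin t ^ (2 / p)) θ) ^ 2) ^ ((3 : ℝ) / 2) =
    cCurv p pt θ := by
  have hp0 : 0 < p := by linarith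
  have hc : 0 < cos θ := cos_pos_of_mem_Ioo ⟨by linarith [hθ.1, pi_pos], hθ.2⟩
  have hs : 0 < sin θ := sin_pos_of_pos_of_lt_pi hθ.1 (by linarith [hθ.2, pi_pos])
  have hexp : 4 / pt = 2 * (2 - 2 / p) := by linear_combination 4 * hpt
  have hcoef : |2 - 2 / p| / |p * (2 / p)| = (p - 1) / p := by
    rw [mul_div_cancel₀ _ hp0.ne', abs_of_pos (by rw [sub_pos, div_lt_iff₀ hp0]; linarith)]
    field_simp
    ring
  have hdouble : (1 / 2 : ℝ) ^ (2 * (1 - 2 / p)) * sin (2 * θ) ^ (2 * (1 - 2 / p)) =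
      (sin θ * cos θ) ^ (2 * (1 - 2 / p)) := by
    rw [sin_two_mul, ← mul_rpow (by norm_num) (mul_pos (mul_pos two_pos hs) hc).le]
    ring_nf
  refine (planeCurvature_const_mul_cos_rpow_sin_rpow p (2 / p) hc hs).trans ?_
  rw [cCurv, hexp, mul_assoc _ ((1 / 2 : ℝ) ^ _), hdouble, hcoef]
end

section
/- For 1 < p < 2, the curvature function c_p(θ) = ((p-1)/p) (1/2)^{2(1-2/p)} (sin 2θ)^{2(1-2/p)} / [(cos θ)^{4/p̃} + (sin θ)^{4/p̃}]^{3/2} (with 1/p + 1/p̃ = 1) is strictly decreasing for θ ∈ (0, π/4). -/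
open Real Filter Topology

/-!
On `(0, π/4)` the angle `2θ` stays in `(0, π/2)`, so `sin 2θ` increases and, the exponent
`2(1 - 2/p)` being negative, the numerator of `c_p` decreases. The exponent `a = 4/p̃ = 4(1 - 1/p)`
lies in `(0, 2)`, and the derivative of `cos^a θ + sin^a θ` is
`a sin θ cos θ (sin^{a-2} θ - cos^{a-2} θ) > 0` because `sin θ < cos θ` and `a - 2 < 0`;
so the denominator increases.
-/

open Set

lemma StrictAntiOn.div_of_strictMonoOn {α 𝕜 : Type*} [Preorder α] [Field 𝕜] [LinearOrder 𝕜]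
    [IsStrictOrderedRing 𝕜] {s : Set α} {f g : α → 𝕜} (hf : StrictAntiOn f s)
    (hg : StrictMonoOn g s) (hf₀ : ∀ x ∈ s, 0 ≤ f x) (hg₀ : ∀ x ∈ s, 0 < g x) :
    StrictAntiOn (fun x => f x / g x) s := by
  intro x hx y hy hxy
  calc f y / g y < f x / g y := div_lt_div_of_pos_right (hf hx hy hxy) (hg₀ y hy)
    _ ≤ f x / g x := div_le_div_of_nonneg_left (hf₀ x hx) (hg₀ x hx) (hg hx hy hxy).le

section QuarterPeriod

variable {x : ℝ}

lemma sin_pos_of_mem_Ioo_zero_pi_div_four (hx : x ∈ Ioo 0 (π / 4)) : 0 < sin x :=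
  sin_pos_of_pos_of_lt_pi hx.1 (by linarith [hx.2, pi_pos])

lemma cos_pos_of_mem_Ioo_zero_pi_div_four (hx : x ∈ Ioo 0 (π / 4)) : 0 < cos x :=
  cos_pos_of_mem_Ioo ⟨by linarith [hx.1, pi_pos], by linarith [hx.2, pi_pos]⟩

lemma sin_two_mul_pos_of_mem_Ioo_zero_pi_div_four (hx : x ∈ Ioo 0 (π / 4)) : 0 < sin (2 * x) :=
  sin_pos_of_pos_of_lt_pi (by linarith [hx.1]) (by linarith [hx.2, pi_pos])

lemma sin_lt_cos_of_nonneg_of_lt_pi_div_four (hx₀ : 0 ≤ x) (hx : x < π / 4) : sin x < cos x := by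
  rw [← sin_pi_div_two_sub]
  exact strictMonoOn_sin ⟨by linarith [pi_pos], by linarith⟩ ⟨by linarith, by linarith [pi_pos]⟩
    (by linarith)

end QuarterPeriod

lemma sin_two_mul_rpow_strictAntiOn {e : ℝ} (he : e < 0) :
    StrictAntiOn (fun θ => sin (2 * θ) ^ e) (Ioo 0 (π / 4)) := by
  intro x hx y hy hxy
  have hπ := pi_pos
  exact rpow_lt_rpow_of_neg (sin_two_mul_pos_of_mem_Ioo_zero_pi_div_four hx)
    (strictMonoOn_sin ⟨by linarith [hx.1], by linarith [hx.2]⟩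
      ⟨by linarith [hy.1], by linarith [hy.2]⟩ (by linarith)) he

lemma hasDerivAt_cos_rpow_add_sin_rpow {a x : ℝ} (hc : 0 < cos x) (hs : 0 < sin x) :
    HasDerivAt (fun θ => cos θ ^ a + sin θ ^ a)
      (a * (sin x * cos x) * (sin x ^ (a - 2) - cos x ^ (a - 2))) x := by
  have hpow : ∀ t : ℝ, 0 < t → t ^ (a - 1) = t * t ^ (a - 2) := fun t ht => by
    rw [show a - 1 = (a - 2) + 1 by ring, rpow_add_one ht.ne', mul_comm]
  refine (((hasDerivAt_cos x).rpow_const (p := a) (Or.inl hc.ne')).add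
    ((hasDerivAt_sin x).rpow_const (p := a) (Or.inl hs.ne'))).congr_deriv ?_
  rw [hpow _ hc, hpow _ hs]
  ring

lemma cos_rpow_add_sin_rpow_strictMonoOn {a : ℝ} (ha₀ : 0 < a) (ha₂ : a < 2) :
    StrictMonoOn (fun θ => cos θ ^ a + sin θ ^ a) (Ioo 0 (π / 4)) := by
  refine strictMonoOn_of_hasDerivWithinAt_pos (convex_Ioo _ _)
    ((continuous_cos.rpow_const fun _ => Or.inr ha₀.le).add
      (continuous_sin.rpow_const fun _ => Or.inr ha₀.le)).continuousOn
    (fun x hx => (hasDerivAt_cos_rpow_add_sin_rpow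
      (cos_pos_of_mem_Ioo_zero_pi_div_four (interior_subset hx))
      (sin_pos_of_mem_Ioo_zero_pi_div_four (interior_subset hx))).hasDerivWithinAt) ?_
  rw [interior_Ioo]
  intro x hx
  have hs := sin_pos_of_mem_Ioo_zero_pi_div_four hx
  have hc := cos_pos_of_mem_Ioo_zero_pi_div_four hx
  have hsc := sin_lt_cos_of_nonneg_of_lt_pi_div_four hx.1.le hx.2
  exact mul_pos (mul_pos ha₀ (mul_pos hs hc))
    (sub_pos.2 (rpow_lt_rpow_of_neg hs hsc (by linarith)))

/-- For `1 < p < 2` the curvature `c_p` is strictly decreasing on `(0, π/4)`. -/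
theorem cCurv_strictAntiOn (p pt : ℝ) (hp1 : 1 < p) (hp2 : p < 2)
    (hpt : 1 / p + 1 / pt = 1) :
    StrictAntiOn (cCurv p pt) (Set.Ioo 0 (π / 4)) := by
  have hp0 : 0 < p := by linarith
  have he : 2 * (1 - 2 / p) < 0 := by linarith [(one_lt_div hp0).2 hp2]
  have ha : 4 / pt = 4 * (1 - 1 / p) := by
    rw [div_eq_mul_one_div, show 1 / pt = 1 - 1 / p by linarith]
  have ha₀ : 0 < 4 / pt := by rw [ha]; linarith [(div_lt_one hp0).2 hp1]
  have ha₂ : 4 / pt < 2 := by rw [ha]; linarith [one_div_lt_one_div_of_lt hp0 hp2]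
  have hC : 0 < (p - 1) / p * (1 / 2 : ℝ) ^ (2 * (1 - 2 / p)) :=
    mul_pos (div_pos (sub_pos.2 hp1) hp0) (rpow_pos_of_pos one_half_pos _)
  have hD : ∀ θ ∈ Ioo 0 (π / 4), 0 < cos θ ^ (4 / pt) + sin θ ^ (4 / pt) := fun θ hθ =>
    add_pos (rpow_pos_of_pos (cos_pos_of_mem_Ioo_zero_pi_div_four hθ) _)
      (rpow_pos_of_pos (sin_pos_of_mem_Ioo_zero_pi_div_four hθ) _)
  refine StrictAntiOn.div_of_strictMonoOn
    (fun x hx y hy hxy => mul_lt_mul_of_pos_left (sin_two_mul_rpow_strictAntiOn he hx hy hxy) hC)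
    ((strictMonoOn_rpow_Ici_of_exponent_pos (r := 3 / 2) (by norm_num)).comp
      (cos_rpow_add_sin_rpow_strictMonoOn ha₀ ha₂)
      fun θ hθ => (hD θ hθ).le)
    (fun θ hθ =>
      (mul_pos hC (rpow_pos_of_pos (sin_two_mul_pos_of_mem_Ioo_zero_pi_div_four hθ) _)).le)
    (fun θ hθ => rpow_pos_of_pos (hD θ hθ) _)
end

section
/- For 2 < p < ∞, the curvature function c_p(θ) = ((p-1)/p) (1/2)^{2(1-2/p)} (sin 2θ)^{2(1-2/p)} / [(cos θ)^{4/p̃} + (sin θ)^{4/p̃}]^{3/2} (with 1/p + 1/p̃ = 1) is strictly increasing for θ ∈ (0, π/4). -/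
/-!
The numerator `sin (2θ) ^ (2 - 4/p)` increases on `(0, π/4)` because `2 - 4/p > 0`. The base
`cos θ ^ b + sin θ ^ b` of the denominator, with `b = 4/p̃ = 4 - 4/p > 2`, decreases there: its
derivative is `b sin θ cos θ (sin θ ^ (b-2) - cos θ ^ (b-2))`, negative since `sin θ < cos θ`.
-/

open Real Filter Topology

lemma StrictMonoOn.div_strictAntiOn {α : Type*} [Preorder α] {f g : α → ℝ} {s : Set α}
    (hf : StrictMonoOn f s) (hg : StrictAntiOn g s) (hf0 : ∀ x ∈ s, 0 ≤ f x)
    (hg0 : ∀ x ∈ s, 0 < g x) : StrictMonoOn (fun x => f x / g x) s := by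
  intro x hx y hy hxy
  calc f x / g x ≤ f x / g y := div_le_div_of_nonneg_left (hf0 x hx) (hg0 y hy) (hg hx hy hxy).le
    _ < f y / g y := div_lt_div_of_pos_right (hf hx hy hxy) (hg0 y hy)

lemma sin_pos_and_lt_cos {θ : ℝ} (hθ : θ ∈ Set.Ioo 0 (π / 4)) :
    0 < sin θ ∧ sin θ < cos θ := by
  obtain ⟨h0, h4⟩ := hθ
  refine ⟨sin_pos_of_pos_of_lt_pi h0 (by linarith [pi_pos]), ?_⟩
  rw [← sin_pi_div_two_sub]
  exact strictMonoOn_sin ⟨by linarith [pi_pos], by linarith⟩ ⟨by linarith, by linarith⟩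
    (by linarith)

lemma strictAntiOn_cos_rpow_add_sin_rpow {b : ℝ} (hb : 2 < b) :
    StrictAntiOn (fun θ => cos θ ^ b + sin θ ^ b) (Set.Ioo 0 (π / 4)) := by
  have hderiv : ∀ θ ∈ Set.Ioo 0 (π / 4), HasDerivAt (fun t => cos t ^ b + sin t ^ b)
      (b * sin θ * cos θ * (sin θ ^ (b - 2) - cos θ ^ (b - 2))) θ := by
    intro θ hθ
    obtain ⟨hs, hsc⟩ := sin_pos_and_lt_cos hθ
    have hc := hs.trans hsc
    refine (((hasDerivAt_cos θ).rpow_const (p := b) (Or.inl hc.ne')).add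
      ((hasDerivAt_sin θ).rpow_const (p := b) (Or.inl hs.ne'))).congr_deriv ?_
    rw [show b - 1 = (b - 2) + 1 by ring, rpow_add hs, rpow_add hc, rpow_one, rpow_one]
    ring
  apply strictAntiOn_of_deriv_neg (convex_Ioo _ _)
  · exact fun θ hθ => (hderiv θ hθ).continuousAt.continuousWithinAt
  · rw [interior_Ioo]
    intro θ hθ
    obtain ⟨hs, hsc⟩ := sin_pos_and_lt_cos hθ
    rw [(hderiv θ hθ).deriv]
    exact mul_neg_of_pos_of_neg (by positivity [hs.trans hsc])
      (sub_neg.2 (rpow_lt_rpow hs.le hsc (by linarith)))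

lemma strictMonoOn_sin_two_mul_rpow {a : ℝ} (ha : 0 < a) :
    StrictMonoOn (fun θ => sin (2 * θ) ^ a) (Set.Ioo 0 (π / 4)) := by
  intro x ⟨hx0, hx4⟩ y ⟨hy0, hy4⟩ hxy
  have hpi := pi_pos
  exact rpow_lt_rpow (sin_pos_of_pos_of_lt_pi (by linarith) (by linarith)).le
    (strictMonoOn_sin ⟨by linarith, by linarith⟩ ⟨by linarith, by linarith⟩ (by linarith)) ha

/-- For `2 < p < ∞` the curvature `c_p` is strictly increasing on `(0, π/4)`. -/
theorem cCurv_strictMonoOn (p pt : ℝ) (hp : 2 < p) (hpt : 1 / p + 1 / pt = 1) :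
    StrictMonoOn (cCurv p pt) (Set.Ioo 0 (π / 4)) := by
  have hp0 : 0 < p := by linarith
  have ha : 0 < 2 * (1 - 2 / p) := by
    have : 2 / p < 1 := (div_lt_one hp0).2 hp
    linarith
  have hb : 2 < 4 / pt := by
    have : 4 / pt = 4 - 4 / p := by linear_combination 4 * hpt
    have : 4 / p < 2 := (div_lt_iff₀ hp0).2 (by linarith)
    linarith
  have hC : 0 < (p - 1) / p * (1 / 2 : ℝ) ^ (2 * (1 - 2 / p)) := by
    have : 0 < p - 1 := by linarith
    positivity
  have hden : ∀ θ ∈ Set.Ioo 0 (π / 4), 0 < cos θ ^ (4 / pt) + sin θ ^ (4 / pt) := by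
    intro θ hθ
    obtain ⟨hs, hsc⟩ := sin_pos_and_lt_cos hθ
    have := hs.trans hsc
    positivity
  refine StrictMonoOn.div_strictAntiOn
    (fun x hx y hy hxy => mul_lt_mul_of_pos_left (strictMonoOn_sin_two_mul_rpow ha hx hy hxy) hC)
    (fun x hx y hy hxy => rpow_lt_rpow (hden y hy).le
      (strictAntiOn_cos_rpow_add_sin_rpow hb hx hy hxy) (by norm_num)) ?_ ?_
  · intro θ hθ
    obtain ⟨hs, hsc⟩ := sin_pos_and_lt_cos hθ
    have := hs.trans hsc
    rw [sin_two_mul]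
    positivity
  · exact fun θ hθ => rpow_pos_of_pos (hden θ hθ) _
end

section
/- For every x > 0, lim_{p→1} f_p(x) = (x−1)/log x, where f_p(x) = (1/(p p̃)) (x−1)²/((x^{1/p}−1)(x^{1/p̃}−1)) with 1/p + 1/p̃ = 1. Thus the WYD functions converge pointwise to the BKM function f₁(x) = (x−1)/log x as p → 1. -/
open Real Filter Topology

/-- The Wigner–Yanase–Dyson generating function `f_p`. -/
noncomputable def fWYD (p pt x : ℝ) : ℝ :=
  (1 / (p * pt)) * (x - 1) ^ 2 / ((x ^ (1 / p) - 1) * (x ^ (1 / pt) - 1))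

/-!
With `t = 1/p̃ = (p - 1)/p`, the function splits as
`f_p(x) = [(1/p) (x - 1)² / (x^{1/p} - 1)] · [t / (x^t - 1)]`.
As `p → 1` the first factor is continuous with value `x - 1`, while `t → 0` punctured, so the
second factor is the inverse of the difference quotient of `t ↦ x^t` at `0` and tends to `1/log x`.
-/

lemma tendsto_rpow_sub_one_div_nhdsNE_zero {x : ℝ} (hx : 0 < x) :
    Tendsto (fun t : ℝ => (x ^ t - 1) / t) (𝓝[≠] 0) (𝓝 (log x)) := by
  have hderiv : HasDerivAt (fun t : ℝ => x ^ t) (log x) 0 := by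
    simpa using (hasStrictDerivAt_const_rpow hx 0).hasDerivAt
  refine (hasDerivAt_iff_tendsto_slope.mp hderiv).congr fun t => ?_
  simp [slope_def_field]

lemma tendsto_sub_one_div_self_nhdsNE_one :
    Tendsto (fun p : ℝ => (p - 1) / p) (𝓝[≠] 1) (𝓝[≠] 0) := by
  refine tendsto_nhdsWithin_of_tendsto_nhds_of_eventually_within _ ?_ ?_
  · have hcont : ContinuousAt (fun p : ℝ => (p - 1) / p) 1 := by fun_prop (disch := norm_num)
    simpa using hcont.tendsto.mono_left nhdsWithin_le_nhds
  · filter_upwards [self_mem_nhdsWithin,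
      nhdsWithin_le_nhds (eventually_ne_nhds one_ne_zero)] with p hp1 hp0
    exact div_ne_zero (sub_ne_zero.mpr hp1) hp0

lemma fWYD_conjExponent {p x : ℝ} (hp0 : p ≠ 0) (hp1 : p ≠ 1) :
    fWYD p (p / (p - 1)) x =
      1 / p * (x - 1) ^ 2 / (x ^ (1 / p) - 1) * ((p - 1) / p / (x ^ ((p - 1) / p) - 1)) := by
  have hp1' : p - 1 ≠ 0 := sub_ne_zero.mpr hp1
  rw [fWYD, one_div_div]
  field_simp

lemma tendsto_one_div_mul_sq_div_rpow_one_div_sub_one {x : ℝ} (hx : 0 < x) (hx1 : x ≠ 1) :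
    Tendsto (fun p : ℝ => 1 / p * (x - 1) ^ 2 / (x ^ (1 / p) - 1)) (𝓝[≠] 1) (𝓝 (x - 1)) := by
  have hxm1 : x - 1 ≠ 0 := sub_ne_zero.mpr hx1
  have hcont : ContinuousAt (fun p : ℝ => 1 / p * (x - 1) ^ 2 / (x ^ (1 / p) - 1)) 1 := by
    have hrpow : ContinuousAt (fun p : ℝ => x ^ (1 / p)) 1 :=
      (continuousAt_const_rpow hx.ne').comp (by fun_prop (disch := norm_num))
    exact ContinuousAt.div (by fun_prop (disch := norm_num)) (hrpow.sub continuousAt_const) (by simpa using hxm1)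
  convert hcont.tendsto.mono_left nhdsWithin_le_nhds using 2
  rw [div_one, rpow_one, one_mul, sq, mul_div_cancel_right₀ _ hxm1]

/-- `lim_{p→1} f_p(x) = (x−1)/log x` for every `x > 0` (here `p̃ = p/(p−1)`). -/
theorem fWYD_tendsto_BKM (x : ℝ) (hx : 0 < x) :
    Tendsto (fun p : ℝ => fWYD p (p / (p - 1)) x) (𝓝[≠] (1 : ℝ))
      (𝓝 ((x - 1) / Real.log x)) := by
  rcases eq_or_ne x 1 with rfl | hx1
  · simp [fWYD]
  have hlog : log x ≠ 0 := log_ne_zero_of_pos_of_ne_one hx hx1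
  have hsecond : Tendsto (fun p : ℝ => (p - 1) / p / (x ^ ((p - 1) / p) - 1))
      (𝓝[≠] 1) (𝓝 (log x)⁻¹) := by
    simpa [Function.comp_def] using
      ((tendsto_rpow_sub_one_div_nhdsNE_zero hx).inv₀ hlog).comp tendsto_sub_one_div_self_nhdsNE_one
  rw [div_eq_mul_inv]
  refine ((tendsto_one_div_mul_sq_div_rpow_one_div_sub_one hx hx1).mul hsecond).congr' ?_
  filter_upwards [self_mem_nhdsWithin,
    nhdsWithin_le_nhds (eventually_ne_nhds one_ne_zero)] with p hp1 hp0
  exact (fWYD_conjExponent hp0 hp1).symm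
end
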